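/- arXiv:2304.07629 — 4 statements merged into one kernel-verified Lean document; each statement's English description precedes it below -/
import Mathlib

section
/- Apostol's formula: for real x > -2 (with x ≠ 1), ζ'(x) = -1/(x-1)² + 1/12 - [x(x+1)(x+2)/6]·I₃'(x) - [(3x²+6x+2)/6]·I₃(x), where I₃(s) = ∫₁^∞ P₃(t)/t^{s+3} dt and I₃'(s) = -∫₁^∞ P₃(t)·ln t / t^{s+3} dt, with P₃ the 1-periodic Bernoulli function P₃(t) = B₃(t - ⌊t⌋)/1 (equivalently (3/(2π³))·Σ_{k≥1} sin(2kπt)/k³). -/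
open Real MeasureTheory

/-- The periodized third Bernoulli function, given by its Fourier series. -/
noncomputable def P₃ (x : ℝ) : ℝ :=
  (3 / (2 * π ^ 3)) * ∑' k : ℕ, Real.sin (2 * (k + 1) * π * x) / ((k : ℝ) + 1) ^ 3

/-- `I₃ s = ∫₁^∞ P₃ t / t^(s+3) dt`. -/
noncomputable def I₃ (s : ℝ) : ℝ := ∫ t in Set.Ioi (1 : ℝ), P₃ t / t ^ (s + 3)

/-- `I₃' s = -∫₁^∞ P₃ t · ln t / t^(s+3) dt` (the derivative of `I₃`). -/
noncomputable def I₃' (s : ℝ) : ℝ := -∫ t in Set.Ioi (1 : ℝ), P₃ t * Real.log t / t ^ (s + 3)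

/-!
On `[n, n + 1]` the function `P₃` is `B₃(t - n)`, and with `u = t - n` the function
`B₁(u) t^(-s) + (s/2) B₂(u) t^(-s-1) + (s(s+1)/6) B₃(u) t^(-s-2)` is an antiderivative of
`t^(-s) - s(s+1)(s+2)/6 · P₃(t) t^(-s-3)` (integration by parts three times). Summing over `n`
and letting `n → ∞` gives, for `re s > 1`, the Euler–Maclaurin formula
`ζ(s) = 1/(s-1) + 1/2 + s/12 - s(s+1)(s+2)/6 · ∫₁^∞ P₃(t) t^(-s-3) dt`.
The integral is the Mellin transform of the bounded function `P₃ · 1_(1,∞)`, hence holomorphic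
for `re s > -2` with derivative given by inserting `-log t`. By the identity theorem the formula
holds on the connected set `{re s > -2} \ {1}`; differentiating it at real `x` gives the theorem.
-/

open Set Filter Topology Asymptotics

section MellinTail

variable {E : Type*} [NormedAddCommGroup E]

lemma indicator_Ioi_one_isBigO_nhdsGT_zero (f : ℝ → E) (b : ℝ) :
    (Ioi 1).indicator f =O[𝓝[>] 0] (· ^ b) := by
  refine (isBigO_zero _ _).congr' ?_ EventuallyEq.rfl
  filter_upwards [nhdsWithin_le_nhds (Iio_mem_nhds zero_lt_one)] with t ht
  exact (indicator_of_notMem (fun h : 1 < t => lt_asymm ht h) f).symm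

lemma eventually_indicator_Ioi_one (f : ℝ → E) : (Ioi 1).indicator f =ᶠ[atTop] f := by
  filter_upwards [eventually_gt_atTop 1] with t ht
  exact indicator_of_mem ht f

variable [NormedSpace ℂ E]

lemma cpow_smul_indicator_Ioi_one (f : ℝ → E) (s : ℂ) :
    (fun t : ℝ => (t : ℂ) ^ s • (Ioi 1).indicator f t)
      = (Ioi 1).indicator fun t : ℝ => (t : ℂ) ^ s • f t :=
  funext fun t => (indicator_smul_apply _ (fun t : ℝ => (t : ℂ) ^ s) f t).symm

lemma mellin_indicator_Ioi_one (f : ℝ → E) (s : ℂ) :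
    mellin ((Ioi 1).indicator f) s = ∫ t in Ioi (1 : ℝ), (t : ℂ) ^ (s - 1) • f t := by
  rw [mellin, cpow_smul_indicator_Ioi_one, setIntegral_indicator measurableSet_Ioi,
    Ioi_inter_Ioi, sup_of_le_right zero_le_one]

lemma mellinConvergent_indicator_Ioi_one_iff (f : ℝ → E) (s : ℂ) :
    MellinConvergent ((Ioi 1).indicator f) s ↔
      IntegrableOn (fun t : ℝ => (t : ℂ) ^ (s - 1) • f t) (Ioi 1) := by
  rw [MellinConvergent, cpow_smul_indicator_Ioi_one, IntegrableOn,
    integrable_indicator_iff measurableSet_Ioi, IntegrableOn,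
    Measure.restrict_restrict measurableSet_Ioi, Ioi_inter_Ioi, sup_of_le_left zero_le_one]
  rfl

variable {f : ℝ → E} {a : ℝ} {s : ℂ}

lemma integrableOn_Ioi_one_cpow_smul (hf : LocallyIntegrable f) (hf_top : f =O[atTop] (· ^ (-a)))
    (hs : s.re < a) : IntegrableOn (fun t : ℝ => (t : ℂ) ^ (s - 1) • f t) (Ioi 1) :=
  (mellinConvergent_indicator_Ioi_one_iff f s).mp <|
    mellinConvergent_of_isBigO_rpow ((hf.indicator measurableSet_Ioi).locallyIntegrableOn _)
      (hf_top.congr' (eventually_indicator_Ioi_one f).symm EventuallyEq.rfl) hs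
      (indicator_Ioi_one_isBigO_nhdsGT_zero f _) (sub_one_lt s.re)

lemma hasDerivAt_integral_Ioi_one_cpow_smul (hf : LocallyIntegrable f)
    (hf_top : f =O[atTop] (· ^ (-a))) (hs : s.re < a) :
    HasDerivAt (fun z : ℂ => ∫ t in Ioi (1 : ℝ), (t : ℂ) ^ (z - 1) • f t)
      (∫ t in Ioi (1 : ℝ), (t : ℂ) ^ (s - 1) • Real.log t • f t) s := by
  have h := (mellin_hasDerivAt_of_isBigO_rpow
    ((hf.indicator measurableSet_Ioi).locallyIntegrableOn _)
    (hf_top.congr' (eventually_indicator_Ioi_one f).symm EventuallyEq.rfl) hs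
    (indicator_Ioi_one_isBigO_nhdsGT_zero f _) (sub_one_lt s.re)).2
  simp_rw [← indicator_smul_apply, mellin_indicator_Ioi_one] at h
  rwa [show mellin ((Ioi 1).indicator f) = _ from funext (mellin_indicator_Ioi_one f)] at h

end MellinTail

lemma tendsto_ofReal_cpow_atTop_zero {c : ℂ} (hc : c.re < 0) :
    Tendsto (fun x : ℝ => (x : ℂ) ^ c) atTop (𝓝 0) := by
  rw [tendsto_zero_iff_norm_tendsto_zero]
  refine (tendsto_rpow_neg_atTop (neg_pos.mpr hc)).congr' ?_
  filter_upwards [eventually_gt_atTop 0] with x hx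
  rw [Complex.norm_cpow_eq_rpow_re_of_pos hx, neg_neg]

lemma isOpen_re_gt_diff_singleton (a : ℝ) (b : ℂ) : IsOpen ({s : ℂ | a < s.re} \ {b}) :=
  (isOpen_lt continuous_const Complex.continuous_re).sdiff isClosed_singleton

lemma isPreconnected_re_gt_diff_singleton {a b : ℝ} (hab : a < b) :
    IsPreconnected ({s : ℂ | a < s.re} \ {(b : ℂ)}) := by
  -- the half-plane `re > b` and the wedges `re ∓ im < b` cover the set and meet at `b + 1 ± 2i`
  have hconv (f : ℂ →ₗ[ℝ] ℝ) : IsPreconnected ({s : ℂ | a < s.re} ∩ {s | f s < b}) :=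
    ((convex_halfSpace_re_gt a).inter (convex_halfSpace_lt f.isLinear b)).isPreconnected
  have hA := hconv (Complex.reLm - Complex.imLm)
  have hB := hconv (Complex.reLm + Complex.imLm)
  have hC := (convex_halfSpace_re_gt b).isPreconnected
  have hCA := hC.union (⟨b + 1, 2⟩ : ℂ) (show b < b + 1 by linarith)
    (⟨show a < b + 1 by linarith, show b + 1 - 2 < b by linarith⟩ : _ ∧ _) hA
  have hCAB := hCA.union (⟨b + 1, -2⟩ : ℂ) (Or.inl (show b < b + 1 by linarith))
    (⟨show a < b + 1 by linarith, show b + 1 + -2 < b by linarith⟩ : _ ∧ _) hB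
  convert hCAB using 1
  ext s
  simp only [Set.mem_sdiff, mem_ofPred_eq, mem_singleton_iff, mem_union, mem_inter_iff,
    LinearMap.sub_apply, LinearMap.add_apply, Complex.reLm_coe, Complex.imLm_coe, Complex.ext_iff,
    Complex.ofReal_re, Complex.ofReal_im]
  constructor
  · rintro ⟨ha, hne⟩
    by_contra! h
    obtain ⟨⟨h₁, h₂⟩, h₃⟩ := h
    have := h₂ ha
    have := h₃ ha
    exact hne ⟨by linarith, by linarith⟩
  · rintro ((h | ⟨ha, h⟩) | ⟨ha, h⟩) <;>
      exact ⟨by linarith, fun ⟨hre, him⟩ => by linarith⟩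

lemma bernoulliFun_three_eval_zero : bernoulliFun 3 0 = 0 := by
  rw [bernoulliFun_eval_zero, bernoulli_eq_zero_of_odd (by decide) (by norm_num), Rat.cast_zero]

lemma hasDerivAt_bernoulliFun_sub_mul_cpow (k : ℕ) (a : ℝ) (c : ℂ) {t : ℝ} (ht : 0 < t) :
    HasDerivAt (fun t : ℝ => (bernoulliFun k (t - a) : ℂ) * (t : ℂ) ^ c)
      (k * bernoulliFun (k - 1) (t - a) * (t : ℂ) ^ c
        + bernoulliFun k (t - a) * (c * (t : ℂ) ^ (c - 1))) t := by
  have hB := ((hasDerivAt_bernoulliFun k (t - a)).comp_sub_const t a).ofReal_comp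
  have hp := (Complex.hasStrictDerivAt_cpow_const (c := c)
    (Complex.ofReal_mem_slitPlane.mpr ht)).hasDerivAt.comp_ofReal
  exact (hB.mul hp).congr_deriv (by push_cast; ring)

noncomputable def eulerMaclaurinIntegrand (g : ℝ → ℝ) (s : ℂ) (t : ℝ) : ℂ :=
  (t : ℂ) ^ (-s) - s * (s + 1) * (s + 2) / 6 * ((t : ℂ) ^ (-s - 3) * g t)

lemma continuousOn_eulerMaclaurinIntegrand {g : ℝ → ℝ} (hg : Continuous g) (s : ℂ) :
    ContinuousOn (eulerMaclaurinIntegrand g s) (Ioi 0) := by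
  refine fun t ht => ContinuousAt.continuousWithinAt ?_
  have hcpow (c : ℂ) : ContinuousAt (fun t : ℝ => (t : ℂ) ^ c) t :=
    Complex.continuousAt_ofReal_cpow_const _ _ (Or.inr (ne_of_gt ht))
  have := hcpow (-s)
  have := hcpow (-s - 3)
  unfold eulerMaclaurinIntegrand
  fun_prop

lemma integral_eulerMaclaurinIntegrand_bernoulliFun_three (s : ℂ) {a : ℝ} (ha : 0 < a) :
    ∫ t in a..a + 1, eulerMaclaurinIntegrand (fun u => bernoulliFun 3 (u - a)) s t
      = (((a + 1 : ℝ) : ℂ) ^ (-s) + (a : ℂ) ^ (-s)) / 2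
        + s / 12 * (((a + 1 : ℝ) : ℂ) ^ (-s - 1) - (a : ℂ) ^ (-s - 1)) := by
  have hpos : uIcc a (a + 1) ⊆ Ioi 0 := by
    rw [uIcc_of_le (by linarith)]
    exact fun t ht => ha.trans_le ht.1
  have hH : ∀ t ∈ uIcc a (a + 1), HasDerivAt
      (fun t : ℝ => (bernoulliFun 1 (t - a) : ℂ) * (t : ℂ) ^ (-s)
        + s / 2 * ((bernoulliFun 2 (t - a) : ℂ) * (t : ℂ) ^ (-s - 1))
        + s * (s + 1) / 6 * ((bernoulliFun 3 (t - a) : ℂ) * (t : ℂ) ^ (-s - 2)))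
      (eulerMaclaurinIntegrand (fun u => bernoulliFun 3 (u - a)) s t) t := by
    intro t ht
    have h1 := hasDerivAt_bernoulliFun_sub_mul_cpow 1 a (-s) (hpos ht)
    have h2 := hasDerivAt_bernoulliFun_sub_mul_cpow 2 a (-s - 1) (hpos ht)
    have h3 := hasDerivAt_bernoulliFun_sub_mul_cpow 3 a (-s - 2) (hpos ht)
    refine ((h1.add (h2.const_mul (s / 2))).add (h3.const_mul (s * (s + 1) / 6))).congr_deriv ?_
    norm_num [eulerMaclaurinIntegrand, show -s - 1 - 1 = -s - 2 by ring,
      show -s - 2 - 1 = -s - 3 by ring]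
    ring
  rw [intervalIntegral.integral_eq_sub_of_hasDerivAt hH
    (((continuousOn_eulerMaclaurinIntegrand ((continuous_bernoulliFun 3).comp
      (continuous_sub_right a)) s).mono hpos).intervalIntegrable)]
  simp only [add_sub_cancel_left, sub_self, bernoulliFun_one, bernoulliFun_two,
    bernoulliFun_endpoints_eq_of_ne_one (show 3 ≠ 1 by norm_num), bernoulliFun_three_eval_zero]
  push_cast
  ring

lemma P₃_eq_bernoulliFun_fract (t : ℝ) : P₃ t = bernoulliFun 3 (Int.fract t) := by
  have hsum := hasSum_one_div_nat_pow_mul_sin (k := 1) one_ne_zero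
    (⟨Int.fract_nonneg t, (Int.fract_lt_one t).le⟩ : Int.fract t ∈ Icc (0 : ℝ) 1)
  have hsin (n : ℕ) : Real.sin (2 * π * n * Int.fract t) = Real.sin (2 * π * n * t) := by
    rw [← Int.self_sub_floor,
      show 2 * π * n * (t - ⌊t⌋) = 2 * π * n * t - (n * ⌊t⌋ : ℤ) * (2 * π) by
        push_cast; ring,
      Real.sin_sub_int_mul_two_pi]
  simp_rw [hsin] at hsum
  rw [← hasSum_nat_add_iff' 1] at hsum
  simp only [Finset.range_one, Finset.sum_singleton, Nat.cast_zero, mul_zero, zero_mul,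
    Real.sin_zero, sub_zero, Nat.reduceMul, Nat.reduceAdd, Nat.cast_add, Nat.cast_one] at hsum
  have hterms : (fun k : ℕ => Real.sin (2 * (k + 1) * π * t) / ((k : ℝ) + 1) ^ 3)
      = fun n : ℕ => 1 / ((n : ℝ) + 1) ^ 3 * Real.sin (2 * π * (n + 1) * t) := by
    ext n
    rw [one_div_mul_eq_div, mul_right_comm 2 π]
  rw [P₃, hterms, hsum.tsum_eq, bernoulliFun]
  norm_num [Nat.factorial]
  field_simp
  ring

lemma continuous_P₃ : Continuous P₃ := by
  have h : Continuous (bernoulliFun 3 ∘ Int.fract) :=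
    (continuous_bernoulliFun 3).continuousOn.comp_fract''
      (bernoulliFun_endpoints_eq_of_ne_one (by norm_num)).symm
  exact h.congr fun t => (P₃_eq_bernoulliFun_fract t).symm

lemma exists_abs_P₃_le : ∃ C, ∀ t, |P₃ t| ≤ C := by
  obtain ⟨C, hC⟩ := isCompact_Icc.exists_bound_of_continuousOn
    (continuous_bernoulliFun 3).continuousOn (s := Icc (0 : ℝ) 1)
  refine ⟨C, fun t => ?_⟩
  simpa [P₃_eq_bernoulliFun_fract] using hC _ ⟨Int.fract_nonneg t, (Int.fract_lt_one t).le⟩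

lemma P₃_eq_bernoulliFun_sub {n : ℤ} {t : ℝ} (ht : t ∈ Icc (n : ℝ) (n + 1)) :
    P₃ t = bernoulliFun 3 (t - n) := by
  rw [P₃_eq_bernoulliFun_fract]
  rcases ht.2.lt_or_eq with hlt | rfl
  · rw [Int.fract, Int.floor_eq_iff.mpr ⟨ht.1, hlt⟩]
  · rw [← Int.cast_one, ← Int.cast_add, Int.fract_intCast, Int.cast_add, Int.cast_one,
      add_sub_cancel_left, bernoulliFun_endpoints_eq_of_ne_one (by norm_num)]

noncomputable def I₃ℂ (s : ℂ) : ℂ := ∫ t in Ioi (1 : ℝ), (t : ℂ) ^ (-s - 3) * P₃ t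

noncomputable def I₃ℂ' (s : ℂ) : ℂ :=
  -∫ t in Ioi (1 : ℝ), (t : ℂ) ^ (-s - 3) * (Real.log t * P₃ t)

lemma isBigO_atTop_P₃ : (fun t : ℝ => (P₃ t : ℂ)) =O[atTop] (· ^ (-(0 : ℝ))) := by
  obtain ⟨C, hC⟩ := exists_abs_P₃_le
  refine IsBigO.of_bound C (Eventually.of_forall fun t => ?_)
  simpa using hC t

lemma locallyIntegrable_P₃ : LocallyIntegrable fun t : ℝ => (P₃ t : ℂ) :=
  (Complex.continuous_ofReal.comp continuous_P₃).locallyIntegrable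

lemma integrableOn_cpow_mul_P₃ {s : ℂ} (hs : -2 < s.re) :
    IntegrableOn (fun t : ℝ => (t : ℂ) ^ (-s - 3) * P₃ t) (Ioi 1) := by
  have hs' : (-s - 2).re < 0 := by
    simp only [Complex.sub_re, Complex.neg_re, Complex.re_ofNat]; linarith
  have h := integrableOn_Ioi_one_cpow_smul locallyIntegrable_P₃ isBigO_atTop_P₃ hs'
  simp_rw [smul_eq_mul, show -s - 2 - 1 = -s - 3 by ring] at h
  exact h

lemma hasDerivAt_I₃ℂ {s : ℂ} (hs : -2 < s.re) : HasDerivAt I₃ℂ (I₃ℂ' s) s := by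
  have hs' : (-s - 2).re < 0 := by
    simp only [Complex.sub_re, Complex.neg_re, Complex.re_ofNat]; linarith
  have h := (hasDerivAt_integral_Ioi_one_cpow_smul locallyIntegrable_P₃ isBigO_atTop_P₃
    hs').comp s ((hasDerivAt_neg s).sub_const 2)
  have hexp (z : ℂ) : -z - 2 - 1 = -z - 3 := by ring
  simp only [Function.comp_def, hexp, smul_eq_mul, Complex.real_smul, mul_neg_one] at h
  exact h

lemma ofReal_cpow_neg_sub_three {t : ℝ} (ht : 0 < t) (x : ℝ) :
    (t : ℂ) ^ (-(x : ℂ) - 3) = ((t ^ (x + 3))⁻¹ : ℝ) := by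
  rw [← Real.rpow_neg ht.le, Complex.ofReal_cpow ht.le, Complex.ofReal_neg, Complex.ofReal_add,
    Complex.ofReal_ofNat, neg_add']

lemma I₃ℂ_ofReal (x : ℝ) : I₃ℂ x = I₃ x := by
  rw [I₃ℂ, I₃, ← integral_complex_ofReal]
  refine setIntegral_congr_fun measurableSet_Ioi fun t ht => ?_
  rw [ofReal_cpow_neg_sub_three (zero_lt_one.trans ht)]
  push_cast
  ring

lemma I₃ℂ'_ofReal (x : ℝ) : I₃ℂ' x = I₃' x := by
  rw [I₃ℂ', I₃', Complex.ofReal_neg, ← integral_complex_ofReal]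
  congr 1
  refine setIntegral_congr_fun measurableSet_Ioi fun t ht => ?_
  rw [ofReal_cpow_neg_sub_three (zero_lt_one.trans ht)]
  push_cast
  ring

lemma sum_one_div_cpow_eq (s : ℂ) (n : ℕ) :
    ∑ k ∈ Finset.range (n + 1), 1 / ((k : ℂ) + 1) ^ s
      = (∫ t in (1 : ℝ)..n + 1, eulerMaclaurinIntegrand P₃ s t)
        + 1 / 2 + ((n : ℂ) + 1) ^ (-s) / 2 - s / 12 * (((n : ℂ) + 1) ^ (-s - 1) - 1) := by
  have hint {a b : ℝ} (ha : 0 < a) (hb : 0 < b) :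
      IntervalIntegrable (eulerMaclaurinIntegrand P₃ s) volume a b :=
    ((continuousOn_eulerMaclaurinIntegrand continuous_P₃ s).mono
      fun t ht => (lt_min ha hb).trans_le ht.1).intervalIntegrable
  induction n with
  | zero => norm_num
  | succ n ih =>
    have hn : (0 : ℝ) < n + 1 := by positivity
    have hP₃ : ∫ t in (n + 1 : ℝ)..n + 1 + 1, eulerMaclaurinIntegrand P₃ s t
        = ∫ t in (n + 1 : ℝ)..n + 1 + 1,
            eulerMaclaurinIntegrand (fun u => bernoulliFun 3 (u - (n + 1))) s t := by
      refine intervalIntegral.integral_congr fun t ht => ?_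
      rw [uIcc_of_le (by linarith)] at ht
      simp only [eulerMaclaurinIntegrand,
        P₃_eq_bernoulliFun_sub (n := n + 1) (by exact_mod_cast ht), Int.cast_add,
        Int.cast_natCast, Int.cast_one]
    rw [Finset.sum_range_succ, ih]
    push_cast
    rw [← intervalIntegral.integral_add_adjacent_intervals (hint one_pos hn)
        (hint (b := n + 1 + 1) hn (by positivity)),
      hP₃, integral_eulerMaclaurinIntegrand_bernoulliFun_three s hn]
    simp only [one_div, ← Complex.cpow_neg]
    push_cast
    ring

lemma integrableOn_eulerMaclaurinIntegrand_P₃ {s : ℂ} (hs : 1 < s.re) :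
    IntegrableOn (eulerMaclaurinIntegrand P₃ s) (Ioi 1) :=
  (integrableOn_Ioi_cpow_of_lt (by simpa using neg_lt_neg hs) zero_lt_one).sub
    ((integrableOn_cpow_mul_P₃ (by linarith)).const_mul _)

lemma integral_Ioi_one_eulerMaclaurinIntegrand_P₃ {s : ℂ} (hs : 1 < s.re) :
    ∫ t in Ioi (1 : ℝ), eulerMaclaurinIntegrand P₃ s t
      = (s - 1)⁻¹ - s * (s + 1) * (s + 2) / 6 * I₃ℂ s := by
  have hs' : (-s).re < -1 := by simpa using neg_lt_neg hs
  simp only [eulerMaclaurinIntegrand]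
  rw [integral_sub (integrableOn_Ioi_cpow_of_lt hs' zero_lt_one)
      ((integrableOn_cpow_mul_P₃ (by linarith)).const_mul _), integral_const_mul,
    integral_Ioi_cpow_of_lt hs' zero_lt_one, I₃ℂ, Complex.ofReal_one, Complex.one_cpow,
    neg_div, ← div_neg, neg_add, neg_neg, one_div, ← sub_eq_add_neg]

lemma riemannZeta_eq_of_one_lt_re {s : ℂ} (hs : 1 < s.re) :
    riemannZeta s = (s - 1)⁻¹ + 1 / 2 + s / 12 - s * (s + 1) * (s + 2) / 6 * I₃ℂ s := by
  have hN : Tendsto (fun n : ℕ => (n : ℝ) + 1) atTop atTop :=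
    tendsto_atTop_add_const_right _ 1 tendsto_natCast_atTop_atTop
  have hpow {c : ℂ} (hc : c.re < 0) :
      Tendsto (fun n : ℕ => ((n : ℂ) + 1) ^ c) atTop (𝓝 0) := by
    simpa [Function.comp_def] using (tendsto_ofReal_cpow_atTop_zero hc).comp hN
  have hsum : Summable fun n : ℕ => 1 / ((n : ℂ) + 1) ^ s := by
    simpa using (summable_nat_add_iff 1).mpr (Complex.summable_one_div_nat_cpow.mpr hs)
  have hL := hsum.hasSum.tendsto_sum_nat.comp (tendsto_add_atTop_nat 1)
  rw [← zeta_eq_tsum_one_div_nat_add_one_cpow hs] at hL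
  have hI :=
    intervalIntegral_tendsto_integral_Ioi 1 (integrableOn_eulerMaclaurinIntegrand_P₃ hs) hN
  have h₁ : (-s).re < 0 := by simp only [Complex.neg_re]; linarith
  have h₂ : (-s - 1).re < 0 := by
    simp only [Complex.sub_re, Complex.neg_re, Complex.one_re]; linarith
  have hR := ((hI.add_const (1 / 2)).add ((hpow h₁).div_const 2)).sub
    (((hpow h₂).sub_const 1).const_mul (s / 12))
  rw [tendsto_nhds_unique hL (hR.congr fun n => (sum_one_div_cpow_eq s n).symm),
    integral_Ioi_one_eulerMaclaurinIntegrand_P₃ hs]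
  ring

lemma riemannZeta_eqOn :
    EqOn riemannZeta
      (fun s => (s - 1)⁻¹ + 1 / 2 + s / 12 - s * (s + 1) * (s + 2) / 6 * I₃ℂ s)
      ({s : ℂ | -2 < s.re} \ {1}) := by
  have hopen := isOpen_re_gt_diff_singleton (-2) 1
  have hζ : DifferentiableOn ℂ riemannZeta ({s : ℂ | -2 < s.re} \ {1}) := fun s hs =>
    (differentiableAt_riemannZeta hs.2).differentiableWithinAt
  have hG : DifferentiableOn ℂ
      (fun s => (s - 1)⁻¹ + 1 / 2 + s / 12 - s * (s + 1) * (s + 2) / 6 * I₃ℂ s)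
      ({s : ℂ | -2 < s.re} \ {1}) := fun s hs => by
    have := (hasDerivAt_I₃ℂ hs.1).differentiableAt
    have : s - 1 ≠ 0 := sub_ne_zero.mpr hs.2
    exact DifferentiableAt.differentiableWithinAt (by fun_prop (disch := assumption))
  refine (hζ.analyticOnNhd hopen).eqOn_of_preconnected_of_eventuallyEq (hG.analyticOnNhd hopen)
    (by simpa using isPreconnected_re_gt_diff_singleton (show (-2 : ℝ) < 1 by norm_num))
    (z₀ := 2) (by norm_num) ?_
  filter_upwards [(isOpen_lt continuous_const Complex.continuous_re).mem_nhds
    (show (1 : ℝ) < (2 : ℂ).re by norm_num)] with s hs using riemannZeta_eq_of_one_lt_re hs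

lemma hasDerivAt_riemannZeta {s : ℂ} (hs : -2 < s.re) (hs1 : s ≠ 1) :
    HasDerivAt riemannZeta (-((s - 1) ^ 2)⁻¹ + 1 / 12 - (3 * s ^ 2 + 6 * s + 2) / 6 * I₃ℂ s
      - s * (s + 1) * (s + 2) / 6 * I₃ℂ' s) s := by
  have hinv : HasDerivAt (fun z : ℂ => (z - 1)⁻¹) (-((s - 1) ^ 2)⁻¹) s :=
    (((hasDerivAt_id s).sub_const 1).inv (sub_ne_zero.mpr hs1)).congr_deriv
      (by simp only [id_eq]; ring)
  have hpoly :
      HasDerivAt (fun z : ℂ => z * (z + 1) * (z + 2) / 6) ((3 * s ^ 2 + 6 * s + 2) / 6) s :=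
    ((((hasDerivAt_id s).mul ((hasDerivAt_id s).add_const 1)).mul
      ((hasDerivAt_id s).add_const 2)).div_const 6).congr_deriv
        (by simp only [id_eq, Pi.mul_apply]; ring)
  have hG := ((hinv.add_const (1 / 2)).add ((hasDerivAt_id s).div_const 12)).sub
    (hpoly.mul (hasDerivAt_I₃ℂ hs))
  refine (hG.congr_deriv (by ring)).congr_of_eventuallyEq ?_
  exact riemannZeta_eqOn.eventuallyEq_of_mem
    ((isOpen_re_gt_diff_singleton _ _).mem_nhds ⟨hs, hs1⟩)

theorem apostol_formula (x : ℝ) (hx : -2 < x) (hx1 : x ≠ 1) :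
    deriv riemannZeta x
      = ((-1 / (x - 1) ^ 2 + 1 / 12 - (x * (x + 1) * (x + 2) / 6) * I₃' x
          - ((3 * x ^ 2 + 6 * x + 2) / 6) * I₃ x : ℝ) : ℂ) := by
  rw [(hasDerivAt_riemannZeta (by simpa using hx) (by exact_mod_cast hx1)).deriv, I₃ℂ_ofReal,
    I₃ℂ'_ofReal]
  push_cast
  ring
end

section
/- With I₃(2) = ∫₁^∞ P₃(t)/t⁵ dt and P₃ the periodized third Bernoulli polynomial, one has I₃(2) = (1/(4π²))·Σ_{k=1}^∞ [k(1 - 2k²π²) + 2k⁴π³(π - 2·Si(2kπ))]/k³. -/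
open Real MeasureTheory

/-- The sine integral `Si z = ∫_0^z sin t / t dt`. -/
noncomputable def Si (z : ℝ) : ℝ := ∫ t in (0 : ℝ)..z, Real.sin t / t

/-!
Expand `P₃` in its Fourier series and integrate termwise; this is legitimate because the `k`-th
term is bounded by `t⁻⁵ / k³`. Each term `∫₁^∞ sin (a t) / t⁵ dt` is evaluated through an explicit
primitive, obtained by integrating by parts four times down to `sin (a t) / t`, whose primitive is
`Si (a t)`. Its limit at `∞` comes from the Dirichlet integral `Si R → π / 2`, which follows from
`sin t / t = ∫₀^∞ sin t · e^{-tu} du` and Fubini, in the quantitative form `|Si R - π / 2| ≤ 1 / R`.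
-/

open Set Filter Topology

lemma integral_sin_mul_exp_neg_mul (u R : ℝ) :
    ∫ t in (0 : ℝ)..R, sin t * exp (-t * u) =
      (1 - exp (-R * u) * (cos R + u * sin R)) / (1 + u ^ 2) := by
  have hu : 1 + u ^ 2 ≠ 0 := by positivity
  have hderiv : ∀ t ∈ uIcc 0 R, HasDerivAt
      (fun t => -(exp (-t * u) * (cos t + u * sin t)) / (1 + u ^ 2))
      (sin t * exp (-t * u)) t := by
    intro t _
    have hexp : HasDerivAt (fun t => exp (-t * u)) (exp (-t * u) * -u) t := by
      simpa using ((hasDerivAt_neg t).mul_const u).exp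
    have htrig : HasDerivAt (fun t => cos t + u * sin t) (-sin t + u * cos t) t :=
      (hasDerivAt_cos t).add ((hasDerivAt_sin t).const_mul u)
    refine (((hexp.mul htrig).neg).div_const (1 + u ^ 2)).congr_deriv ?_
    field_simp
    ring
  rw [intervalIntegral.integral_eq_sub_of_hasDerivAt hderiv
    ((by fun_prop : Continuous fun t => sin t * exp (-t * u)).intervalIntegrable 0 R)]
  simp only [neg_zero, zero_mul, exp_zero, cos_zero, sin_zero]
  ring

lemma abs_cos_add_mul_sin_le (R u : ℝ) : |cos R + u * sin R| ≤ 1 + u ^ 2 :=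
  abs_le_of_sq_le_sq (by nlinarith [sin_sq_add_cos_sq R, sq_nonneg (u * cos R - sin R)])
    (by positivity)

lemma integrableOn_exp_neg_mul_Ioi {t : ℝ} (ht : 0 < t) :
    IntegrableOn (fun u => exp (-t * u)) (Ioi 0) :=
  integrableOn_exp_mul_Ioi (neg_lt_zero.2 ht) 0

lemma integral_exp_neg_mul_Ioi {t : ℝ} (ht : 0 < t) :
    ∫ u in Ioi (0 : ℝ), exp (-t * u) = t⁻¹ := by
  rw [integral_exp_mul_Ioi (neg_lt_zero.2 ht), mul_zero, exp_zero, neg_div_neg_eq, one_div]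

lemma integrable_sin_mul_exp_neg_mul_prod (R : ℝ) :
    Integrable (fun p : ℝ × ℝ => sin p.1 * exp (-p.1 * p.2))
      ((volume.restrict (Ioc 0 R)).prod (volume.restrict (Ioi 0))) := by
  have hmeas : AEStronglyMeasurable (fun p : ℝ × ℝ => sin p.1 * exp (-p.1 * p.2))
      ((volume.restrict (Ioc 0 R)).prod (volume.restrict (Ioi 0))) :=
    (by fun_prop : Continuous fun p : ℝ × ℝ => sin p.1 * exp (-p.1 * p.2)).aestronglyMeasurable
  refine (integrable_prod_iff hmeas).2 ⟨?_, ?_⟩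
  · filter_upwards [ae_restrict_mem measurableSet_Ioc] with t ht
    exact (integrableOn_exp_neg_mul_Ioi ht.1).const_mul _
  · have hinner : ∀ t ∈ Ioc 0 R,
        ∫ u in Ioi (0 : ℝ), ‖sin t * exp (-t * u)‖ = |sin t| / t := fun t ht => by
      simp_rw [norm_mul, Real.norm_eq_abs, abs_of_pos (exp_pos _)]
      rw [integral_const_mul, integral_exp_neg_mul_Ioi ht.1, div_eq_mul_inv]
    have hbound : IntegrableOn (fun t => |sin t| / t) (Ioc 0 R) := by
      refine (integrable_const (1 : ℝ)).mono'
        ((continuous_abs.comp continuous_sin).measurable.div measurable_id).aestronglyMeasurable ?_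
      filter_upwards [ae_restrict_mem measurableSet_Ioc] with t ht
      rw [Real.norm_eq_abs, abs_div, abs_abs, abs_of_pos ht.1]
      exact div_le_one_of_le₀ ((abs_sin_le_abs).trans (abs_of_pos ht.1).le) ht.1.le
    refine hbound.congr ?_
    filter_upwards [ae_restrict_mem measurableSet_Ioc] with t ht
    exact (hinner t ht).symm

lemma Si_eq_integral_Ioi {R : ℝ} (hR : 0 < R) :
    Si R = ∫ u in Ioi (0 : ℝ), (1 - exp (-R * u) * (cos R + u * sin R)) / (1 + u ^ 2) := by
  have hinner : ∀ t ∈ Ioc 0 R, ∫ u in Ioi (0 : ℝ), sin t * exp (-t * u) = sin t / t := by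
    intro t ht
    rw [integral_const_mul, integral_exp_neg_mul_Ioi ht.1, div_eq_mul_inv]
  calc Si R = ∫ t in Ioc 0 R, ∫ u in Ioi (0 : ℝ), sin t * exp (-t * u) := by
        rw [Si, intervalIntegral.integral_of_le hR.le]
        exact (setIntegral_congr_fun measurableSet_Ioc hinner).symm
    _ = ∫ u in Ioi (0 : ℝ), ∫ t in Ioc 0 R, sin t * exp (-t * u) :=
        integral_integral_swap (integrable_sin_mul_exp_neg_mul_prod R)
    _ = _ := by
        simp_rw [← intervalIntegral.integral_of_le hR.le, integral_sin_mul_exp_neg_mul]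

lemma abs_Si_sub_pi_div_two_le {R : ℝ} (hR : 0 < R) : |Si R - π / 2| ≤ R⁻¹ := by
  set g : ℝ → ℝ := fun u => (cos R + u * sin R) / (1 + u ^ 2)
  have hg : ∀ u, ‖g u‖ ≤ 1 := fun u => by
    rw [Real.norm_eq_abs, abs_div, abs_of_pos (by positivity : (0 : ℝ) < 1 + u ^ 2), div_le_one (by positivity)]
    exact abs_cos_add_mul_sin_le R u
  have hexp := integrableOn_exp_neg_mul_Ioi hR
  have hexp_g : IntegrableOn (fun u => exp (-R * u) * g u) (Ioi 0) :=
    hexp.mul_bdd (by fun_prop) (Eventually.of_forall hg)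
  have hSi : Si R - π / 2 = -∫ u in Ioi (0 : ℝ), exp (-R * u) * g u := by
    have hsplit : ∀ u, (1 - exp (-R * u) * (cos R + u * sin R)) / (1 + u ^ 2)
        = (1 + u ^ 2)⁻¹ - exp (-R * u) * g u := fun u => by simp only [g]; ring
    rw [Si_eq_integral_Ioi hR, funext hsplit,
      integral_sub integrable_inv_one_add_sq.integrableOn hexp_g, integral_Ioi_inv_one_add_sq,
      arctan_zero]
    ring
  calc |Si R - π / 2| = |∫ u in Ioi (0 : ℝ), exp (-R * u) * g u| := by rw [hSi, abs_neg]
    _ ≤ ∫ u in Ioi (0 : ℝ), exp (-R * u) := by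
        refine (abs_integral_le_integral_abs).trans (setIntegral_mono_on hexp_g.abs hexp
          measurableSet_Ioi fun u _ => ?_)
        rw [abs_mul, abs_of_pos (exp_pos _)]
        exact mul_le_of_le_one_right (exp_pos _).le (hg u)
    _ = R⁻¹ := integral_exp_neg_mul_Ioi hR

lemma tendsto_Si_atTop : Tendsto Si atTop (𝓝 (π / 2)) := by
  refine tendsto_iff_norm_sub_tendsto_zero.2 (squeeze_zero' (Eventually.of_forall fun _ => norm_nonneg _)
    ?_ tendsto_inv_atTop_zero)
  filter_upwards [eventually_gt_atTop 0] with R hR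
  exact abs_Si_sub_pi_div_two_le hR

lemma intervalIntegrable_sin_div_self (a b : ℝ) :
    IntervalIntegrable (fun t => sin t / t) volume a b := by
  refine (intervalIntegrable_const (c := (1 : ℝ))).mono_fun'
    (continuous_sin.measurable.div measurable_id).aestronglyMeasurable
    (Eventually.of_forall fun t => ?_)
  change ‖sin t / t‖ ≤ 1
  rw [Real.norm_eq_abs, abs_div]
  exact div_le_one_of_le₀ abs_sin_le_abs (abs_nonneg t)

lemma hasDerivAt_Si {z : ℝ} (hz : z ≠ 0) : HasDerivAt Si (sin z / z) z :=
  intervalIntegral.integral_hasDerivAt_right (intervalIntegrable_sin_div_self 0 z)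
    (continuous_sin.measurable.div measurable_id).stronglyMeasurable.stronglyMeasurableAtFilter
    (continuous_sin.continuousAt.div continuousAt_id hz)

noncomputable def sinDivPowFivePrimitive (a t : ℝ) : ℝ :=
  -sin (a * t) / (4 * t ^ 4) - a * cos (a * t) / (12 * t ^ 3) + a ^ 2 * sin (a * t) / (24 * t ^ 2)
    + a ^ 3 * cos (a * t) / (24 * t ^ 1) + a ^ 4 / 24 * Si (a * t)

lemma hasDerivAt_sinDivPowFivePrimitive {a t : ℝ} (ha : a ≠ 0) (ht : t ≠ 0) :
    HasDerivAt (sinDivPowFivePrimitive a) (sin (a * t) / t ^ 5) t := by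
  have hlin : HasDerivAt (fun t => a * t) a t := by simpa using (hasDerivAt_id t).const_mul a
  have hsin : HasDerivAt (fun t => sin (a * t)) (cos (a * t) * a) t := (hasDerivAt_sin _).comp t hlin
  have hcos : HasDerivAt (fun t => cos (a * t)) (-sin (a * t) * a) t :=
    (hasDerivAt_cos _).comp t hlin
  have hSi : HasDerivAt (fun t => Si (a * t)) (sin (a * t) / (a * t) * a) t :=
    (hasDerivAt_Si (mul_ne_zero ha ht)).comp t hlin
  have hpow (c : ℝ) (n : ℕ) : HasDerivAt (fun t => c * t ^ n) (c * (n * t ^ (n - 1))) t :=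
    (hasDerivAt_pow n t).const_mul c
  refine ((((((hsin.neg.div (hpow 4 4) (by positivity)).sub
    ((hcos.const_mul a).div (hpow 12 3) (by positivity))).add
    ((hsin.const_mul (a ^ 2)).div (hpow 24 2) (by positivity))).add
    ((hcos.const_mul (a ^ 3)).div (hpow 24 1) (by positivity))).add
    (hSi.const_mul (a ^ 4 / 24)))).congr_deriv ?_
  simp only [Pi.neg_apply]
  field_simp
  ring

lemma tendsto_div_const_mul_pow_atTop {f : ℝ → ℝ} {B : ℝ} (hf : ∀ t, |f t| ≤ B) {c : ℝ}
    (hc : 0 < c) {n : ℕ} (hn : n ≠ 0) :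
    Tendsto (fun t => f t / (c * t ^ n)) atTop (𝓝 0) :=
  tendsto_bdd_div_atTop_nhds_zero (Eventually.of_forall fun t => (abs_le.1 (hf t)).1)
    (Eventually.of_forall fun t => (abs_le.1 (hf t)).2) ((tendsto_pow_atTop hn).const_mul_atTop hc)

lemma tendsto_sinDivPowFivePrimitive_atTop {a : ℝ} (ha : 0 < a) :
    Tendsto (sinDivPowFivePrimitive a) atTop (𝓝 (a ^ 4 / 24 * (π / 2))) := by
  have hbound (c : ℝ) {f : ℝ → ℝ} (hf : ∀ x, |f x| ≤ 1) (t : ℝ) : |c * f (a * t)| ≤ |c| := by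
    rw [abs_mul]
    exact mul_le_of_le_one_right (abs_nonneg c) (hf _)
  have hSi := (tendsto_Si_atTop.comp (tendsto_id.const_mul_atTop ha)).const_mul (a ^ 4 / 24)
  have := ((((tendsto_div_const_mul_pow_atTop (hbound (-1) abs_sin_le_one) four_pos four_ne_zero).sub
    (tendsto_div_const_mul_pow_atTop (hbound a abs_cos_le_one) (by norm_num : (0 : ℝ) < 12) three_ne_zero)).add
    (tendsto_div_const_mul_pow_atTop (hbound (a ^ 2) abs_sin_le_one) (by norm_num : (0 : ℝ) < 24) two_ne_zero)).add
    (tendsto_div_const_mul_pow_atTop (hbound (a ^ 3) abs_cos_le_one) (by norm_num : (0 : ℝ) < 24) one_ne_zero)).add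
    hSi
  rw [sub_zero, zero_add, zero_add, zero_add] at this
  refine this.congr fun t => ?_
  simp [sinDivPowFivePrimitive, neg_div]

lemma norm_sin_mul_div_pow_five_le (a : ℝ) {t : ℝ} (ht : 0 < t) :
    ‖sin (a * t) / t ^ 5‖ ≤ t ^ (-5 : ℝ) := by
  rw [Real.norm_eq_abs, abs_div, abs_of_pos (by positivity : 0 < t ^ 5), rpow_neg ht.le,
    ← rpow_natCast, Nat.cast_ofNat, ← one_div]
  gcongr
  exact abs_sin_le_one _

lemma aestronglyMeasurable_sin_mul_div_pow_five (a : ℝ) {μ : Measure ℝ} :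
    AEStronglyMeasurable (fun t => sin (a * t) / t ^ 5) μ :=
  ((continuous_sin.comp (continuous_const_mul a)).measurable.div
    (measurable_id.pow_const 5)).aestronglyMeasurable

lemma integrableOn_sin_mul_div_pow_five (a : ℝ) :
    IntegrableOn (fun t => sin (a * t) / t ^ 5) (Ioi 1) := by
  refine (integrableOn_Ioi_rpow_of_lt (by norm_num : (-5 : ℝ) < -1) one_pos).mono'
    (aestronglyMeasurable_sin_mul_div_pow_five a) ?_
  filter_upwards [ae_restrict_mem measurableSet_Ioi] with t ht
  exact norm_sin_mul_div_pow_five_le a (one_pos.trans ht)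

lemma integral_Ioi_one_sin_mul_div_pow_five {a : ℝ} (ha : 0 < a) :
    ∫ t in Ioi (1 : ℝ), sin (a * t) / t ^ 5 = sin a / 4 + a * cos a / 12 - a ^ 2 * sin a / 24
      - a ^ 3 * cos a / 24 + a ^ 4 / 24 * (π / 2 - Si a) := by
  rw [integral_Ioi_of_hasDerivAt_of_tendsto' (fun t ht => hasDerivAt_sinDivPowFivePrimitive
    ha.ne' (one_pos.trans_le ht).ne') (integrableOn_sin_mul_div_pow_five a)
    (tendsto_sinDivPowFivePrimitive_atTop ha), sinDivPowFivePrimitive]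
  simp only [mul_one, one_pow]
  ring

lemma integral_tsum_mul_of_norm_le {α : Type*} [MeasurableSpace α] {μ : Measure α}
    {c : ℕ → ℝ} {g : ℕ → α → ℝ} {B : α → ℝ} (hc : Summable fun k => ‖c k‖)
    (hg : ∀ k, AEStronglyMeasurable (g k) μ) (hB : Integrable B μ)
    (hgB : ∀ k, ∀ᵐ x ∂μ, ‖g k x‖ ≤ B x) :
    ∫ x, ∑' k, c k * g k x ∂μ = ∑' k, c k * ∫ x, g k x ∂μ := by
  have hint (k : ℕ) : Integrable (g k) μ := hB.mono' (hg k) (hgB k)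
  have hnorm (k : ℕ) : ∫ x, ‖c k * g k x‖ ∂μ ≤ ‖c k‖ * ∫ x, B x ∂μ := by
    simp_rw [norm_mul]
    rw [integral_const_mul]
    exact mul_le_mul_of_nonneg_left (integral_mono_ae (hint k).norm hB (hgB k)) (norm_nonneg _)
  rw [← integral_tsum_of_summable_integral_norm (fun k => (hint k).const_mul (c k))
    (.of_nonneg_of_le (fun k => integral_nonneg fun _ => norm_nonneg _) hnorm (hc.mul_right _))]
  simp_rw [integral_const_mul]

lemma summable_one_div_nat_add_one_pow_three :
    Summable fun k : ℕ => ‖1 / ((k : ℝ) + 1) ^ 3‖ := by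
  have := (summable_nat_add_iff 1).2 (Real.summable_one_div_nat_pow.2 (by norm_num : 1 < 3))
  refine this.congr fun k => ?_
  rw [Real.norm_of_nonneg (by positivity)]
  push_cast
  rfl

theorem I₃_two_eq :
    I₃ 2 = (1 / (4 * π ^ 2))
      * ∑' k : ℕ, (((k : ℝ) + 1) * (1 - 2 * ((k : ℝ) + 1) ^ 2 * π ^ 2)
          + 2 * ((k : ℝ) + 1) ^ 4 * π ^ 3 * (π - 2 * Si (2 * ((k : ℝ) + 1) * π)))
        / ((k : ℝ) + 1) ^ 3 := by
  have hP₃ (t : ℝ) : P₃ t / t ^ ((2 : ℝ) + 3) = 3 / (2 * π ^ 3) *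
      ∑' k : ℕ, 1 / ((k : ℝ) + 1) ^ 3 * (sin (2 * ((k : ℝ) + 1) * π * t) / t ^ 5) := by
    rw [P₃, show (2 : ℝ) + 3 = (5 : ℕ) by norm_num, rpow_natCast, mul_div_assoc,
      ← tsum_div_const]
    congr 1
    exact tsum_congr fun k => by ring
  have hterm (k : ℕ) : ∫ t in Ioi (1 : ℝ), sin (2 * ((k : ℝ) + 1) * π * t) / t ^ 5 =
      2 * ((k : ℝ) + 1) * π / 12 - (2 * ((k : ℝ) + 1) * π) ^ 3 / 24
        + (2 * ((k : ℝ) + 1) * π) ^ 4 / 24 * (π / 2 - Si (2 * ((k : ℝ) + 1) * π)) := by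
    rw [integral_Ioi_one_sin_mul_div_pow_five (by positivity),
      show 2 * ((k : ℝ) + 1) * π = (2 * (k + 1) : ℕ) * π by push_cast; ring, sin_nat_mul_pi,
      show ((2 * (k + 1) : ℕ) : ℝ) * π = (k + 1 : ℕ) * (2 * π) by push_cast; ring,
      cos_nat_mul_two_pi]
    push_cast
    ring
  simp_rw [I₃, hP₃]
  rw [integral_const_mul, integral_tsum_mul_of_norm_le summable_one_div_nat_add_one_pow_three
    (fun k => aestronglyMeasurable_sin_mul_div_pow_five _)
    (integrableOn_Ioi_rpow_of_lt (by norm_num : (-5 : ℝ) < -1) one_pos)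
    (fun k => (ae_restrict_mem measurableSet_Ioi).mono fun t ht =>
      norm_sin_mul_div_pow_five_le _ (one_pos.trans ht))]
  simp_rw [hterm, ← tsum_mul_left]
  refine tsum_congr fun k => ?_
  field_simp
  ring
end

section
/- The limit lim_{n→∞} [Σ_{k=1}^n k² ln k - (n³/3 + n²/2 + n/6)·ln n + n³/9 - n/12] exists (defining ln B, the logarithm of the first Bendersky–Adamchik constant). -/
/-!
Call `a n` the bracketed sequence. Since `n (n + 1) (2n + 1) / 6 = ∑_{k ≤ n} k²`, the increment
`a (n + 1) - a n` is `n (n + 1) / 3 + 1 / 36 - n (n + 1) (2n + 1) / 6 · log (1 + 1 / n)`.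
Writing `log (1 + 1 / n) = 2 artanh z` with `z = 1 / (2n + 1)`, the first two terms `z + z³ / 3`
of the artanh series cancel everything but `z² / 36`, and the remainder of the series contributes
at most `z² / 12`. Hence `|a (n + 1) - a n| ≤ 1 / (9 (2n + 1)²)`, the increments are summable and
`a n` converges.
-/

open Real Filter Topology Finset

theorem exists_tendsto_of_summable_sub {E : Type*} [AddCommGroup E] [TopologicalSpace E]
    [IsTopologicalAddGroup E] {a : ℕ → E} (h : Summable fun n => a (n + 1) - a n) :
    ∃ L, Tendsto a atTop (𝓝 L) := by
  obtain ⟨S, hS⟩ := h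
  refine ⟨S + a 0, (hS.tendsto_sum_nat.add_const (a 0)).congr fun n => ?_⟩
  rw [sum_range_sub, sub_add_cancel]

theorem abs_quadratic_sub_cubic_mul_log_le {x : ℝ} (hx : 0 < x) :
    |x * (x + 1) / 3 + 1 / 36 - x * (x + 1) * (2 * x + 1) / 6 * (log (x + 1) - log x)|
      ≤ 1 / (9 * (2 * x + 1) ^ 2) := by
  have hx1 : 2 * x + 1 ≠ 0 := by positivity
  set z := 1 / (2 * x + 1) with hz
  have hz0 : 0 < z := by positivity
  have hz1 : z < 1 := by rw [hz, div_lt_one (by positivity)]; linarith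
  have hz2 : 1 - z ^ 2 ≠ 0 := by nlinarith
  clear_value z
  have hlog : log (x + 1) - log x = 2 * (1 / 2 * log ((1 + z) / (1 - z))) := by
    have : (1 + z) / (1 - z) = (x + 1) / x := by
      rw [hz]; field_simp; ring
    rw [this, log_div (by linarith) hx.ne']; ring
  have hE := sum_range_sub_log_div_le (abs_lt.2 ⟨by linarith, hz1⟩) 2
  set E := 1 / 2 * log ((1 + z) / (1 - z)) - ∑ i ∈ range 2, z ^ (2 * i + 1) / (2 * i + 1)
  set c := x * (x + 1) * (2 * x + 1) / 3
  have hS : ∑ i ∈ range 2, z ^ (2 * i + 1) / (2 * i + 1) = z + z ^ 3 / 3 := by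
    norm_num [sum_range_succ]
  have hT : x * (x + 1) / 3 + 1 / 36 - x * (x + 1) * (2 * x + 1) / 6 * (log (x + 1) - log x)
      = z ^ 2 / 36 - c * E := by
    rw [hlog, show 1 / 2 * log ((1 + z) / (1 - z)) = E + (z + z ^ 3 / 3) by rw [← hS]; ring]
    rw [hz]; field_simp; ring
  have hcE : c * (|z| ^ (2 * 2 + 1) / (1 - z ^ 2)) = z ^ 2 / 12 := by
    rw [abs_of_pos hz0, show 2 * 2 + 1 = 5 from rfl, mul_div_assoc', div_eq_iff hz2, hz]
    simp only [c]; field_simp; ring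
  calc |x * (x + 1) / 3 + 1 / 36 - x * (x + 1) * (2 * x + 1) / 6 * (log (x + 1) - log x)|
      ≤ |z ^ 2 / 36| + |c * E| := hT ▸ abs_sub _ _
    _ ≤ z ^ 2 / 36 + z ^ 2 / 12 := by
        rw [abs_of_nonneg (by positivity), abs_mul, abs_of_nonneg (by positivity), ← hcE]; gcongr
    _ = 1 / (9 * (2 * x + 1) ^ 2) := by rw [hz]; field_simp; ring

noncomputable def lnBSeq (n : ℕ) : ℝ :=
  (∑ k ∈ range n, ((k : ℝ) + 1) ^ 2 * log ((k : ℝ) + 1))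
    - ((n : ℝ) ^ 3 / 3 + (n : ℝ) ^ 2 / 2 + (n : ℝ) / 6) * log n + (n : ℝ) ^ 3 / 9 - (n : ℝ) / 12

theorem lnBSeq_succ_sub (n : ℕ) :
    lnBSeq (n + 1) - lnBSeq n
      = n * (n + 1) / 3 + 1 / 36 - n * (n + 1) * (2 * n + 1) / 6 * (log (n + 1) - log n) := by
  simp only [lnBSeq, sum_range_succ]
  push_cast
  ring

theorem abs_lnBSeq_succ_sub_le (n : ℕ) :
    |lnBSeq (n + 1) - lnBSeq n| ≤ 1 / (9 * (2 * n + 1) ^ 2) := by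
  rw [lnBSeq_succ_sub]
  rcases n.eq_zero_or_pos with rfl | hn
  · norm_num
  · exact abs_quadratic_sub_cubic_mul_log_le (Nat.cast_pos.2 hn)

theorem summable_lnBSeq_succ_sub : Summable fun n => lnBSeq (n + 1) - lnBSeq n := by
  have hodd : Summable fun n : ℕ => 1 / ((2 * n + 1 : ℕ) : ℝ) ^ 2 :=
    (Real.summable_one_div_nat_pow.2 one_lt_two).comp_injective fun a b h => by omega
  refine Summable.of_norm_bounded ((hodd.mul_left (1 / 9)).congr fun n => ?_) abs_lnBSeq_succ_sub_le
  push_cast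
  field_simp

theorem lnB_exists :
    ∃ L : ℝ, Tendsto
      (fun n : ℕ =>
        (∑ k ∈ Finset.range n, ((k : ℝ) + 1) ^ 2 * Real.log ((k : ℝ) + 1))
          - ((n : ℝ) ^ 3 / 3 + (n : ℝ) ^ 2 / 2 + (n : ℝ) / 6) * Real.log n
          + (n : ℝ) ^ 3 / 9 - (n : ℝ) / 12)
      atTop (nhds L) :=
  exists_tendsto_of_summable_sub summable_lnBSeq_succ_sub
end

section
/- The limit lim_{n→∞} [Σ_{k=1}^n k³ ln k - (n⁴/4 + n³/2 + n²/4 - 1/120)·ln n + n⁴/16 - n²/12] exists (defining ln C, the logarithm of the second Bendersky–Adamchik constant). -/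
/-! The increment `s (n + 1) - s n` of the sequence is `n ^ 4 * g (1 / n)`, where
`g y = r y - q y * log (1 + y)` for explicit polynomials `q` and `r`. The coefficients of the
Euler–Maclaurin expansion are exactly those for which the Taylor series of `g` at `0` starts at
`y ^ 6`, so the increments are `O(1 / n ^ 2)`: they are summable and the sequence is Cauchy. -/

open Real Filter Topology Finset

theorem exists_tendsto_of_dist_succ_le {α : Type*} [PseudoMetricSpace α] [CompleteSpace α]
    {f : ℕ → α} {C : ℝ} {p : ℕ} (hp : 1 < p)
    (h : ∀ᶠ n in atTop, dist (f n) (f (n + 1)) ≤ C / (n : ℝ) ^ p) :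
    ∃ a, Tendsto f atTop (𝓝 a) := by
  refine cauchySeq_tendsto_of_complete (cauchySeq_of_summable_dist ?_)
  refine .of_norm_bounded_eventually_nat ((summable_one_div_nat_pow.mpr hp).mul_left C) ?_
  filter_upwards [h] with n hn
  simpa only [Real.norm_eq_abs, abs_dist, mul_one_div] using hn

theorem Real.abs_log_one_add_sub_sum_range_le {y : ℝ} (hy : |y| < 1) (n : ℕ) :
    |log (1 + y) - ∑ i ∈ range n, (-1) ^ i * y ^ (i + 1) / (i + 1)| ≤
      |y| ^ (n + 1) / (1 - |y|) := by
  have h := abs_log_sub_add_sum_range_le (x := -y) (by rwa [abs_neg]) n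
  rw [abs_neg, sub_neg_eq_add] at h
  convert h using 2
  rw [sub_eq_neg_add, ← sum_neg_distrib]
  congr 1
  refine sum_congr rfl fun i _ => ?_
  rw [neg_pow y, pow_succ (-1 : ℝ)]
  ring

noncomputable def lnCStep (y : ℝ) : ℝ :=
  y / 4 + 3 * y ^ 2 / 8 + y ^ 3 / 12 - y ^ 4 / 48
    - (1 / 4 + y / 2 + y ^ 2 / 4 - y ^ 4 / 120) * log (1 + y)

theorem abs_lnCStep_le {y : ℝ} (hy₀ : 0 ≤ y) (hy : y ≤ 1 / 2) : |lnCStep y| ≤ 2 * y ^ 6 := by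
  set q := 1 / 4 + y / 2 + y ^ 2 / 4 - y ^ 4 / 120
  set p := y - y ^ 2 / 2 + y ^ 3 / 3 - y ^ 4 / 4 + y ^ 5 / 5
  set s := (300 + 340 * y + 15 * y ^ 2 - 12 * y ^ 3) / 7200
  have hlog : |log (1 + y) - p| ≤ y ^ 6 / (1 - y) := by
    have h := abs_log_one_add_sub_sum_range_le (y := y) (by rw [abs_of_nonneg hy₀]; linarith) 5
    rw [abs_of_nonneg hy₀] at h
    convert h using 3
    simp only [sum_range_succ, sum_range_zero, p]
    norm_num
    ring
  have hsplit : lnCStep y = -q * (log (1 + y) - p) - y ^ 6 * s := by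
    simp only [lnCStep, q, p, s]
    ring
  have hy₂ : y ^ 2 ≤ 1 / 4 := by nlinarith
  have hy₃ : y ^ 3 ≤ 1 / 8 := by nlinarith
  have hy₄ : y ^ 4 ≤ 1 / 16 := by nlinarith
  have hq₀ : 0 ≤ q := by simp only [q]; nlinarith
  have hq : q ≤ 9 / 16 := by simp only [q]; nlinarith
  have hs₀ : 0 ≤ s := by simp only [s]; nlinarith
  have hs : s ≤ 1 / 8 := by simp only [s]; nlinarith
  have hinv : y ^ 6 / (1 - y) ≤ 2 * y ^ 6 := by
    rw [div_le_iff₀ (by linarith)]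
    nlinarith [pow_nonneg hy₀ 6]
  calc |lnCStep y| ≤ q * |log (1 + y) - p| + y ^ 6 * s := by
        rw [hsplit]
        refine (abs_sub _ _).trans ?_
        rw [abs_mul, abs_neg, abs_of_nonneg hq₀, abs_of_nonneg (mul_nonneg (by positivity) hs₀)]
    _ ≤ 9 / 16 * (2 * y ^ 6) + y ^ 6 * (1 / 8) := by
        gcongr
        exact hlog.trans hinv
    _ ≤ 2 * y ^ 6 := by nlinarith [pow_nonneg hy₀ 6]

noncomputable def lnCSeq (n : ℕ) : ℝ :=
  (∑ k ∈ range n, ((k : ℝ) + 1) ^ 3 * log ((k : ℝ) + 1))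
    - ((n : ℝ) ^ 4 / 4 + (n : ℝ) ^ 3 / 2 + (n : ℝ) ^ 2 / 4 - 1 / 120) * log n
    + (n : ℝ) ^ 4 / 16 - (n : ℝ) ^ 2 / 12

theorem lnCSeq_succ_sub {n : ℕ} (hn : n ≠ 0) :
    lnCSeq (n + 1) - lnCSeq n = (n : ℝ) ^ 4 * lnCStep (1 / n) := by
  have hn' : (0 : ℝ) < n := by positivity
  have hlog : log (1 + 1 / (n : ℝ)) = log (n + 1) - log n := by
    rw [← log_div (by positivity) hn'.ne', add_div, div_self hn'.ne', add_comm]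
  simp only [lnCSeq, lnCStep, sum_range_succ, hlog]
  push_cast
  field_simp
  ring

theorem dist_lnCSeq_succ_le {n : ℕ} (hn : 2 ≤ n) :
    dist (lnCSeq n) (lnCSeq (n + 1)) ≤ 2 / (n : ℝ) ^ 2 := by
  have hn' : (2 : ℝ) ≤ n := by exact_mod_cast hn
  have hstep := abs_lnCStep_le (y := 1 / n) (by positivity) (by gcongr)
  calc dist (lnCSeq n) (lnCSeq (n + 1)) = (n : ℝ) ^ 4 * |lnCStep (1 / n)| := by
        rw [dist_comm, dist_eq, lnCSeq_succ_sub (by omega), abs_mul, abs_of_nonneg (by positivity)]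
    _ ≤ (n : ℝ) ^ 4 * (2 * (1 / n) ^ 6) := by gcongr
    _ = 2 / (n : ℝ) ^ 2 := by field_simp

theorem lnC_exists :
    ∃ L : ℝ, Tendsto
      (fun n : ℕ =>
        (∑ k ∈ Finset.range n, ((k : ℝ) + 1) ^ 3 * Real.log ((k : ℝ) + 1))
          - ((n : ℝ) ^ 4 / 4 + (n : ℝ) ^ 3 / 2 + (n : ℝ) ^ 2 / 4 - 1 / 120) * Real.log n
          + (n : ℝ) ^ 4 / 16 - (n : ℝ) ^ 2 / 12)
      atTop (nhds L) :=
  exists_tendsto_of_dist_succ_le (f := lnCSeq) one_lt_two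
    (eventually_atTop.2 ⟨2, fun _ hn => dist_lnCSeq_succ_le hn⟩)
end
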